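/- arXiv:2510.06666 — 3 statements merged into one kernel-verified Lean document; each statement's English description precedes it below -/
import Mathlib

section
/- Let (Ω, F, P) be a probability space, μ, ν probability measures on ℝ^d, and X : Ω × [0,1] → ℝ^d a stochastic process such that for each ω the path t ↦ X(ω,t) is continuously differentiable, the joint map is suitably measurable, the law of X(·,0) is μ and the law of X(·,1) is ν. Then the expected kinetic energy dominates the Kantorovich quadratic cost: E[∫₀¹ ½‖∂_t X(·,t)‖² dt] ≥ ½ inf_{π ∈ Π(μ,ν)} ∫ ‖x − y‖² dπ(x,y). -/
open MeasureTheory ENNReal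

lemma kinetic_pointwise {d : ℕ} (Y : ℝ → EuclideanSpace ℝ (Fin d))
    (hpath : ContDiff ℝ 1 Y) :
    2⁻¹ * ENNReal.ofReal (‖Y 0 - Y 1‖ ^ 2)
      ≤ ∫⁻ t in Set.Icc (0 : ℝ) 1, ENNReal.ofReal (2⁻¹ * ‖deriv Y t‖ ^ 2) := by
  have hcd : Continuous (deriv Y) := hpath.continuous_deriv le_rfl
  -- fundamental theorem of calculus
  have hft : Y 1 - Y 0 = ∫ t in (0:ℝ)..1, deriv Y t := by
    rw [intervalIntegral.integral_deriv_eq_sub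
      (fun x _ => (hpath.differentiable one_ne_zero).differentiableAt)
      (hcd.intervalIntegrable 0 1)]
  have hnorm : ‖Y 0 - Y 1‖ ≤ ∫ t in Set.Ioc (0:ℝ) 1, ‖deriv Y t‖ := by
    rw [norm_sub_rev, hft]
    calc ‖∫ t in (0:ℝ)..1, deriv Y t‖ ≤ ∫ t in (0:ℝ)..1, ‖deriv Y t‖ :=
          intervalIntegral.norm_integral_le_integral_norm zero_le_one
      _ = _ := intervalIntegral.integral_of_le zero_le_one
  set f : ℝ → ℝ≥0∞ := fun t => ENNReal.ofReal ‖deriv Y t‖ with hf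
  have hfm : AEMeasurable f (volume.restrict (Set.Ioc (0:ℝ) 1)) :=
    (hcd.norm.measurable.ennreal_ofReal).aemeasurable
  have hA : ENNReal.ofReal ‖Y 0 - Y 1‖ ≤ ∫⁻ t in Set.Ioc (0:ℝ) 1, f t := by
    calc ENNReal.ofReal ‖Y 0 - Y 1‖
        ≤ ENNReal.ofReal (∫ t in Set.Ioc (0:ℝ) 1, ‖deriv Y t‖) :=
          ENNReal.ofReal_le_ofReal hnorm
      _ = ∫⁻ t in Set.Ioc (0:ℝ) 1, f t := by
          rw [ofReal_integral_eq_lintegral_ofReal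
            (hcd.norm.integrableOn_Ioc)
            (Filter.Eventually.of_forall fun t => norm_nonneg _)]
  -- Cauchy–Schwarz on the probability space Ioc 0 1
  have hconj : Real.HolderConjugate 2 2 := Real.HolderConjugate.two_two
  have hH := ENNReal.lintegral_mul_le_Lp_mul_Lq (volume.restrict (Set.Ioc (0:ℝ) 1))
    hconj hfm aemeasurable_const (g := fun _ => (1 : ℝ≥0∞))
  have hmass : (volume.restrict (Set.Ioc (0:ℝ) 1)) Set.univ = 1 := by
    simp [Real.volume_Ioc]
  have hH' : (∫⁻ t in Set.Ioc (0:ℝ) 1, f t)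
      ≤ (∫⁻ t in Set.Ioc (0:ℝ) 1, f t ^ (2:ℝ)) ^ (1/2 : ℝ) := by
    simpa [Pi.mul_apply, hmass] using hH
  have hB : (∫⁻ t in Set.Ioc (0:ℝ) 1, f t) ^ (2:ℝ)
      ≤ ∫⁻ t in Set.Ioc (0:ℝ) 1, f t ^ (2:ℝ) := by
    calc (∫⁻ t in Set.Ioc (0:ℝ) 1, f t) ^ (2:ℝ)
        ≤ ((∫⁻ t in Set.Ioc (0:ℝ) 1, f t ^ (2:ℝ)) ^ (1/2 : ℝ)) ^ (2:ℝ) :=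
          ENNReal.rpow_le_rpow hH' (by norm_num)
      _ = ∫⁻ t in Set.Ioc (0:ℝ) 1, f t ^ (2:ℝ) := by
          rw [← ENNReal.rpow_mul]; norm_num
  -- combine
  have key : ENNReal.ofReal (‖Y 0 - Y 1‖ ^ 2)
      ≤ ∫⁻ t in Set.Ioc (0:ℝ) 1, ENNReal.ofReal (‖deriv Y t‖ ^ 2) := by
    have e1 : ENNReal.ofReal (‖Y 0 - Y 1‖ ^ 2)
        = (ENNReal.ofReal ‖Y 0 - Y 1‖) ^ (2:ℝ) := by
      rw [ENNReal.ofReal_pow (norm_nonneg _), ← ENNReal.rpow_natCast]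
      norm_num
    have e2 : ∀ t, f t ^ (2:ℝ) = ENNReal.ofReal (‖deriv Y t‖ ^ 2) := by
      intro t
      show ENNReal.ofReal ‖deriv Y t‖ ^ (2:ℝ) = _
      rw [ENNReal.ofReal_pow (norm_nonneg _), ← ENNReal.rpow_natCast]
      norm_num
    calc ENNReal.ofReal (‖Y 0 - Y 1‖ ^ 2) = (ENNReal.ofReal ‖Y 0 - Y 1‖) ^ (2:ℝ) := e1
      _ ≤ (∫⁻ t in Set.Ioc (0:ℝ) 1, f t) ^ (2:ℝ) :=
          ENNReal.rpow_le_rpow hA (by norm_num)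
      _ ≤ ∫⁻ t in Set.Ioc (0:ℝ) 1, f t ^ (2:ℝ) := hB
      _ = ∫⁻ t in Set.Ioc (0:ℝ) 1, ENNReal.ofReal (‖deriv Y t‖ ^ 2) := by
          simp_rw [e2]
  calc 2⁻¹ * ENNReal.ofReal (‖Y 0 - Y 1‖ ^ 2)
      ≤ 2⁻¹ * ∫⁻ t in Set.Ioc (0:ℝ) 1, ENNReal.ofReal (‖deriv Y t‖ ^ 2) :=
        mul_le_mul_right key _
    _ = ∫⁻ t in Set.Ioc (0:ℝ) 1, 2⁻¹ * ENNReal.ofReal (‖deriv Y t‖ ^ 2) :=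
        (lintegral_const_mul 2⁻¹ ((hcd.norm.measurable.pow_const 2).ennreal_ofReal)).symm
    _ = ∫⁻ t in Set.Ioc (0:ℝ) 1, ENNReal.ofReal (2⁻¹ * ‖deriv Y t‖ ^ 2) := by
        congr 1; funext t
        rw [ENNReal.ofReal_mul (by norm_num : (0:ℝ) ≤ 2⁻¹), ENNReal.ofReal_inv_of_pos two_pos,
          ENNReal.ofReal_ofNat]
    _ ≤ ∫⁻ t in Set.Icc (0:ℝ) 1, ENNReal.ofReal (2⁻¹ * ‖deriv Y t‖ ^ 2) :=
        lintegral_mono_set Set.Ioc_subset_Icc_self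

/-- For any stochastic process with `C¹` sample paths whose time-0 law is
`μ` and time-1 law is `ν`, the expected kinetic energy `E[∫₀¹ ½‖∂ₜX(t)‖² dt]` dominates the
static Kantorovich value `½ inf_{π ∈ Π(μ,ν)} ∫ ‖x - y‖² dπ`. -/
theorem kantorovich_le_expected_kinetic_energy {d : ℕ}
    {Ω : Type*} [MeasurableSpace Ω] (P : Measure Ω) [IsProbabilityMeasure P]
    (μ ν : Measure (EuclideanSpace ℝ (Fin d)))
    [IsProbabilityMeasure μ] [IsProbabilityMeasure ν]
    (X : Ω → ℝ → EuclideanSpace ℝ (Fin d))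
    (hpath : ∀ ω, ContDiff ℝ 1 (X ω))
    (hmeas : Measurable (Function.uncurry X))
    (hderiv : Measurable fun p : Ω × ℝ => deriv (X p.1) p.2)
    (h0 : P.map (fun ω => X ω 0) = μ) (h1 : P.map (fun ω => X ω 1) = ν) :
    ⨅ π ∈ {π : Measure (EuclideanSpace ℝ (Fin d) × EuclideanSpace ℝ (Fin d)) |
        π.map Prod.fst = μ ∧ π.map Prod.snd = ν},
      (2 : ℝ≥0∞)⁻¹ * ∫⁻ p, ENNReal.ofReal (‖p.1 - p.2‖ ^ 2) ∂π
      ≤ ∫⁻ ω, ∫⁻ t in Set.Icc (0 : ℝ) 1,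
          ENNReal.ofReal (2⁻¹ * ‖deriv (X ω) t‖ ^ 2) ∂volume ∂P := by
  have hX0 : Measurable fun ω => X ω 0 :=
    hmeas.comp (measurable_id.prodMk measurable_const)
  have hX1 : Measurable fun ω => X ω 1 :=
    hmeas.comp (measurable_id.prodMk measurable_const)
  have hpair : Measurable fun ω => (X ω 0, X ω 1) := hX0.prodMk hX1
  set π := P.map (fun ω => (X ω 0, X ω 1)) with hπ
  have hmem : π ∈ {π : Measure (EuclideanSpace ℝ (Fin d) × EuclideanSpace ℝ (Fin d)) |
      π.map Prod.fst = μ ∧ π.map Prod.snd = ν} := by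
    constructor
    · rw [hπ, Measure.map_map measurable_fst hpair]; exact h0
    · rw [hπ, Measure.map_map measurable_snd hpair]; exact h1
  refine le_trans (iInf₂_le π hmem) ?_
  have hcost : Measurable fun p : EuclideanSpace ℝ (Fin d) × EuclideanSpace ℝ (Fin d) =>
      ENNReal.ofReal (‖p.1 - p.2‖ ^ 2) :=
    ((measurable_fst.sub measurable_snd).norm.pow_const _).ennreal_ofReal
  rw [hπ, lintegral_map hcost hpair]
  calc (2 : ℝ≥0∞)⁻¹ * ∫⁻ ω, ENNReal.ofReal (‖X ω 0 - X ω 1‖ ^ 2) ∂P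
      = ∫⁻ ω, 2⁻¹ * ENNReal.ofReal (‖X ω 0 - X ω 1‖ ^ 2) ∂P := by
        have hm : Measurable fun ω => ENNReal.ofReal (‖X ω 0 - X ω 1‖ ^ 2) :=
          ((hX0.sub hX1).norm.pow_const _).ennreal_ofReal
        rw [lintegral_const_mul 2⁻¹ hm]
    _ ≤ _ := lintegral_mono fun ω => kinetic_pointwise (X ω) (hpath ω)
end

section
/- Let (Ω, F, P) be a probability space, X₀, X₁ : Ω → ℝ^d square-integrable random vectors, t ∈ [0,1], X_t = (1−t)X₀ + t X₁, and u_t := E[X₁ − X₀ | X_t]. Then the conditional flow matching loss and the flow matching loss differ by a constant independent of the learned field: for every measurable v : ℝ^d → ℝ^d with v(X_t) square-integrable, E[‖v(X_t) − (X₁ − X₀)‖²] − E[‖v(X_t) − u_t‖²] = E[‖(X₁ − X₀) − u_t‖²]. Consequently, any minimizer of v ↦ E[‖v(X_t) − (X₁ − X₀)‖²] also minimizes v ↦ E[‖v(X_t) − u_t‖²], and u_t itself attains the minimum. -/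
open MeasureTheory
open scoped ENNReal

section Aux

variable {d : ℕ} {Ω : Type*} [m0 : MeasurableSpace Ω]

private theorem cfm_sq_integrable (P : Measure Ω) {f : Ω → EuclideanSpace ℝ (Fin d)}
    (hf : MemLp f 2 P) : Integrable (fun ω => ‖f ω‖ ^ 2) P := by
  have h := hf.integrable_norm_rpow two_ne_zero ENNReal.ofNat_ne_top
  have h2 : (2 : ℝ≥0∞).toReal = (2 : ℝ) := by simp
  have h3 : (fun ω => ‖f ω‖ ^ (2 : ℝ≥0∞).toReal) = fun ω => ‖f ω‖ ^ 2 := by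
    funext ω
    rw [h2, show ((2:ℝ)) = ((2:ℕ):ℝ) by norm_num, Real.rpow_natCast]
  rwa [h3] at h

private theorem cfm_inner_integrable (P : Measure Ω) {f h : Ω → EuclideanSpace ℝ (Fin d)}
    (hf : MemLp f 2 P) (hh : MemLp h 2 P) :
    Integrable (fun ω => (inner ℝ (f ω) (h ω) : ℝ)) P := by
  have := L2.integrable_inner (𝕜 := ℝ) (hf.toLp f) (hh.toLp h)
  refine this.congr ?_
  filter_upwards [hf.coeFn_toLp, hh.coeFn_toLp] with ω h1 h2
  rw [h1, h2]

end Aux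

/-- Key Pythagorean identity for the conditional expectation. -/
private theorem cfm_key {d : ℕ} {Ω : Type*} (m : MeasurableSpace Ω)
    [m0 : MeasurableSpace Ω] (hm : m ≤ m0)
    (P : Measure Ω) [IsProbabilityMeasure P]
    (B : Ω → EuclideanSpace ℝ (Fin d)) (hB2 : MemLp B 2 P)
    (A : Ω → EuclideanSpace ℝ (Fin d)) (hAm : AEStronglyMeasurable[m] A P)
    (hA2 : MemLp A 2 P) :
    ∫ ω, ‖A ω - B ω‖ ^ 2 ∂P
      = (∫ ω, ‖A ω - (P[B|m]) ω‖ ^ 2 ∂P) + ∫ ω, ‖B ω - (P[B|m]) ω‖ ^ 2 ∂P := by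
  have hBint : Integrable B P := hB2.integrable one_le_two
  set u : Ω → EuclideanSpace ℝ (Fin d) := P[B|m] with hu_def
  set fL2 : Lp (EuclideanSpace ℝ (Fin d)) 2 P := hB2.toLp B with hfL2_def
  set g : Lp (EuclideanSpace ℝ (Fin d)) 2 P :=
    (condExpL2 (EuclideanSpace ℝ (Fin d)) ℝ hm fL2 : Lp (EuclideanSpace ℝ (Fin d)) 2 P)
    with hg_def
  have hgm : AEStronglyMeasurable[m] (g : Ω → EuclideanSpace ℝ (Fin d)) P :=
    aestronglyMeasurable_condExpL2 hm fL2
  have hgu : (g : Ω → EuclideanSpace ℝ (Fin d)) =ᵐ[P] u := by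
    rw [hu_def]
    refine ae_eq_condExp_of_forall_setIntegral_eq hm hBint
      (fun s _ hμs => integrableOn_Lp_of_measure_ne_top g fact_one_le_two_ennreal.elim hμs.ne)
      (fun s hs hμs => ?_) hgm
    rw [hg_def, integral_condExpL2_eq hm fL2 hs hμs.ne]
    exact setIntegral_congr_ae (hm s hs) ((hB2.coeFn_toLp).mono fun ω hω _ => hω)
  have hu2 : MemLp u 2 P := (Lp.memLp g).ae_eq hgu
  have hum : AEStronglyMeasurable[m] u P := hgm.congr hgu
  -- cross term vanishes
  have hcross : ∀ h : Ω → EuclideanSpace ℝ (Fin d), AEStronglyMeasurable[m] h P →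
      MemLp h 2 P → ∫ ω, (inner ℝ (B ω - u ω) (h ω) : ℝ) ∂P = 0 := by
    intro h hhm hh2
    set hL : Lp (EuclideanSpace ℝ (Fin d)) 2 P := hh2.toLp h with hhL_def
    have hLm : AEStronglyMeasurable[m] (hL : Ω → EuclideanSpace ℝ (Fin d)) P :=
      hhm.congr hh2.coeFn_toLp.symm
    have h0 : (inner ℝ (fL2 - g) hL : ℝ) = 0 := by
      rw [inner_sub_left, hg_def,
        inner_condExpL2_eq_inner_fun hm fL2 hL hLm, sub_self]
    calc ∫ ω, (inner ℝ (B ω - u ω) (h ω) : ℝ) ∂P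
        = (inner ℝ (fL2 - g) hL : ℝ) := by
          rw [L2.inner_def]
          refine integral_congr_ae ?_
          filter_upwards [Lp.coeFn_sub fL2 g, hB2.coeFn_toLp, hgu, hh2.coeFn_toLp] with ω
            h1 h2 h3 h4
          rw [h1, Pi.sub_apply, h2, h3, h4]
      _ = 0 := h0
  have hAu2 : MemLp (fun ω => A ω - u ω) 2 P := hA2.sub hu2
  have hAum : AEStronglyMeasurable[m] (fun ω => A ω - u ω) P := hAm.sub hum
  have hc : ∫ ω, (inner ℝ (B ω - u ω) (A ω - u ω) : ℝ) ∂P = 0 := hcross _ hAum hAu2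
  have hBu2 : MemLp (fun ω => B ω - u ω) 2 P := hB2.sub hu2
  have hint1 : Integrable (fun ω => ‖A ω - u ω‖ ^ 2) P := cfm_sq_integrable P hAu2
  have hint2 : Integrable (fun ω => ‖B ω - u ω‖ ^ 2) P := cfm_sq_integrable P hBu2
  have hint3 : Integrable (fun ω => (inner ℝ (A ω - u ω) (B ω - u ω) : ℝ)) P :=
    cfm_inner_integrable P hAu2 hBu2
  have hpt : ∀ ω, ‖A ω - B ω‖ ^ 2
      = ‖A ω - u ω‖ ^ 2 - 2 * (inner ℝ (A ω - u ω) (B ω - u ω) : ℝ) + ‖B ω - u ω‖ ^ 2 := by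
    intro ω
    have h : A ω - B ω = (A ω - u ω) - (B ω - u ω) := by abel
    rw [h, norm_sub_sq_real]
  calc ∫ ω, ‖A ω - B ω‖ ^ 2 ∂P
      = ∫ ω, (‖A ω - u ω‖ ^ 2 - 2 * (inner ℝ (A ω - u ω) (B ω - u ω) : ℝ)
          + ‖B ω - u ω‖ ^ 2) ∂P :=
        integral_congr_ae (Filter.Eventually.of_forall hpt)
    _ = (∫ ω, ‖A ω - u ω‖ ^ 2 ∂P) - 2 * (∫ ω, (inner ℝ (A ω - u ω) (B ω - u ω) : ℝ) ∂P)
          + ∫ ω, ‖B ω - u ω‖ ^ 2 ∂P := by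
        have hint12 : Integrable
            (fun ω => ‖A ω - u ω‖ ^ 2 - 2 * (inner ℝ (A ω - u ω) (B ω - u ω) : ℝ)) P :=
          hint1.sub (hint3.const_mul 2)
        rw [integral_add hint12 hint2, integral_sub hint1 (hint3.const_mul 2),
          integral_const_mul]
    _ = (∫ ω, ‖A ω - u ω‖ ^ 2 ∂P) + ∫ ω, ‖B ω - u ω‖ ^ 2 ∂P := by
        have h5 : ∫ ω, (inner ℝ (A ω - u ω) (B ω - u ω) : ℝ) ∂P = 0 := by
          rw [← hc]
          exact integral_congr_ae (Filter.Eventually.of_forall fun ω => real_inner_comm _ _)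
        rw [h5]; ring

/-- With `Xₜ = (1-t)X₀ + tX₁` and `uₜ = E[X₁ - X₀ | Xₜ]`, the conditional
flow matching loss `E[‖v(Xₜ) - (X₁ - X₀)‖²]` and the flow matching loss `E[‖v(Xₜ) - uₜ‖²]`
differ by the constant `E[‖(X₁ - X₀) - uₜ‖²]`, independent of `v`. Consequently any
minimizer of the conditional objective also minimizes the flow matching objective, and
`uₜ` itself attains the minimum (the conditional objective of any `v` is at least the
constant). -/
theorem conditional_flow_matching_same_minimizers {d : ℕ}
    {Ω : Type*} [MeasurableSpace Ω] (P : Measure Ω) [IsProbabilityMeasure P]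
    (X₀ X₁ : Ω → EuclideanSpace ℝ (Fin d)) (hX₀ : Measurable X₀) (hX₁ : Measurable X₁)
    (hX₀2 : MemLp X₀ 2 P) (hX₁2 : MemLp X₁ 2 P)
    (t : ℝ) (ht : t ∈ Set.Icc (0 : ℝ) 1)
    (Xt : Ω → EuclideanSpace ℝ (Fin d)) (hXt : Xt = fun ω => (1 - t) • X₀ ω + t • X₁ ω)
    (u : Ω → EuclideanSpace ℝ (Fin d))
    (hu : u = P[fun ω => X₁ ω - X₀ ω |
        MeasurableSpace.comap Xt (borel (EuclideanSpace ℝ (Fin d)))]) :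
    (∀ v : EuclideanSpace ℝ (Fin d) → EuclideanSpace ℝ (Fin d), Measurable v →
        MemLp (fun ω => v (Xt ω)) 2 P →
        (∫ ω, ‖v (Xt ω) - (X₁ ω - X₀ ω)‖ ^ 2 ∂P) - ∫ ω, ‖v (Xt ω) - u ω‖ ^ 2 ∂P
          = ∫ ω, ‖(X₁ ω - X₀ ω) - u ω‖ ^ 2 ∂P) ∧
    (∀ vstar : EuclideanSpace ℝ (Fin d) → EuclideanSpace ℝ (Fin d), Measurable vstar →
        MemLp (fun ω => vstar (Xt ω)) 2 P →
        (∀ v : EuclideanSpace ℝ (Fin d) → EuclideanSpace ℝ (Fin d), Measurable v →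
            MemLp (fun ω => v (Xt ω)) 2 P →
            (∫ ω, ‖vstar (Xt ω) - (X₁ ω - X₀ ω)‖ ^ 2 ∂P)
              ≤ ∫ ω, ‖v (Xt ω) - (X₁ ω - X₀ ω)‖ ^ 2 ∂P) →
        ∀ v : EuclideanSpace ℝ (Fin d) → EuclideanSpace ℝ (Fin d), Measurable v →
          MemLp (fun ω => v (Xt ω)) 2 P →
          (∫ ω, ‖vstar (Xt ω) - u ω‖ ^ 2 ∂P) ≤ ∫ ω, ‖v (Xt ω) - u ω‖ ^ 2 ∂P) ∧
    (∀ v : EuclideanSpace ℝ (Fin d) → EuclideanSpace ℝ (Fin d), Measurable v →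
        MemLp (fun ω => v (Xt ω)) 2 P →
        (∫ ω, ‖(X₁ ω - X₀ ω) - u ω‖ ^ 2 ∂P)
          ≤ ∫ ω, ‖v (Xt ω) - (X₁ ω - X₀ ω)‖ ^ 2 ∂P) := by
  classical
  have hXt_meas : Measurable Xt := by
    rw [hXt]
    exact ((measurable_const_smul _).comp hX₀).add ((measurable_const_smul _).comp hX₁)
  have hborel : borel (EuclideanSpace ℝ (Fin d))
      = (inferInstance : MeasurableSpace (EuclideanSpace ℝ (Fin d))) :=
    (BorelSpace.measurable_eq (α := EuclideanSpace ℝ (Fin d))).symm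
  have hm : MeasurableSpace.comap Xt (borel (EuclideanSpace ℝ (Fin d)))
      ≤ ‹MeasurableSpace Ω› := by
    rw [hborel]
    exact hXt_meas.comap_le
  have hB2 : MemLp (fun ω => X₁ ω - X₀ ω) 2 P := hX₁2.sub hX₀2
  have key : ∀ v : EuclideanSpace ℝ (Fin d) → EuclideanSpace ℝ (Fin d), Measurable v →
      MemLp (fun ω => v (Xt ω)) 2 P →
      ∫ ω, ‖v (Xt ω) - (X₁ ω - X₀ ω)‖ ^ 2 ∂P
        = (∫ ω, ‖v (Xt ω) - u ω‖ ^ 2 ∂P) + ∫ ω, ‖(X₁ ω - X₀ ω) - u ω‖ ^ 2 ∂P := by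
    intro v hv hv2
    have hAm : AEStronglyMeasurable[
        (MeasurableSpace.comap Xt (borel (EuclideanSpace ℝ (Fin d))))]
        (fun ω => v (Xt ω)) P := by
      refine StronglyMeasurable.aestronglyMeasurable (Measurable.stronglyMeasurable ?_)
      have hXtm : @Measurable Ω (EuclideanSpace ℝ (Fin d))
          (MeasurableSpace.comap Xt (borel (EuclideanSpace ℝ (Fin d))))
          (borel (EuclideanSpace ℝ (Fin d))) Xt := Measurable.of_comap_le le_rfl
      have hv'' : @Measurable (EuclideanSpace ℝ (Fin d)) (EuclideanSpace ℝ (Fin d))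
          (borel (EuclideanSpace ℝ (Fin d))) _ v := by
        rw [hborel]; exact hv
      exact hv''.comp hXtm
    have h := cfm_key _ hm P (fun ω => X₁ ω - X₀ ω) hB2 (fun ω => v (Xt ω)) hAm hv2
    rw [← hu] at h
    exact h
  refine ⟨fun v hv hv2 => by have := key v hv hv2; linarith,
    fun vstar hvs hvs2 hmin v hv hv2 => ?_, fun v hv hv2 => ?_⟩
  · have h1 := key vstar hvs hvs2
    have h2 := key v hv hv2
    have h3 := hmin v hv hv2
    linarith
  · have h2 := key v hv hv2
    have h4 : (0:ℝ) ≤ ∫ ω, ‖v (Xt ω) - u ω‖ ^ 2 ∂P :=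
      integral_nonneg fun ω => sq_nonneg _
    linarith
end

section
/- Let (Ω, F, P) be a probability space and X₀, X₁ : Ω → ℝ^d square-integrable random vectors. For t ∈ [0,1] set X_t = (1−t)X₀ + t X₁ and let p_t denote the law of X_t. Then for every smooth compactly supported test function φ : ℝ^d → ℝ, the map t ↦ E[φ(X_t)] is differentiable on (0,1) with derivative d/dt E[φ(X_t)] = E[⟨∇φ(X_t), X₁ − X₀⟩] = E[⟨∇φ(X_t), u_t⟩], where u_t := E[X₁ − X₀ | X_t]. That is, the family (p_t) satisfies the continuity equation ∂_t p_t + ∇·(p_t u(t,·)) = 0 in the weak sense, with velocity field u(t,x) = E[X₁ − X₀ | X_t = x]. -/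
open MeasureTheory RealInnerProductSpace

private lemma abs_coord_le_norm {d : ℕ} (a : EuclideanSpace ℝ (Fin d)) (i : Fin d) :
    |a i| ≤ ‖a‖ := by
  rw [EuclideanSpace.norm_eq, ← Real.sqrt_sq_eq_abs]
  apply Real.sqrt_le_sqrt
  have := Finset.single_le_sum (f := fun j => ‖a j‖ ^ 2) (fun j _ => sq_nonneg _)
    (Finset.mem_univ i)
  simpa [Real.norm_eq_abs, sq_abs] using this

private lemma condexp_coord {d : ℕ} {Ω : Type*} {m : MeasurableSpace Ω}
    [m0 : MeasurableSpace Ω] (μ : Measure Ω)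
    [IsProbabilityMeasure μ] (hm : m ≤ m0)
    {Y : Ω → EuclideanSpace ℝ (Fin d)} (hY : Integrable Y μ) (i : Fin d) :
    (fun ω => (μ[Y|m]) ω i) =ᵐ[μ] μ[fun ω => Y ω i|m] := by
  haveI : SigmaFinite (μ.trim hm) := inferInstance
  set L : EuclideanSpace ℝ (Fin d) →L[ℝ] ℝ := EuclideanSpace.proj i with hL
  have hLapp : ∀ a : EuclideanSpace ℝ (Fin d), L a = a i := fun a => rfl
  have hci : Integrable (μ[Y|m]) μ := integrable_condExp
  refine ae_eq_condExp_of_forall_setIntegral_eq hm (L.integrable_comp hY) ?_ ?_ ?_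
  · intro s hs hμs
    exact (L.integrable_comp hci).integrableOn
  · intro s hs hμs
    have h1 := L.integral_comp_comm (hci.integrableOn (s := s))
    have h2 := L.integral_comp_comm (hY.integrableOn (s := s))
    simp only [hLapp] at h1 h2
    rw [h1, h2, setIntegral_condExp hm hY hs]
  · exact ⟨fun ω => (μ[Y|m]) ω i,
      L.continuous.comp_stronglyMeasurable stronglyMeasurable_condExp,
      Filter.EventuallyEq.rfl⟩

private lemma integral_inner_condexp {d : ℕ} {Ω : Type*} {m : MeasurableSpace Ω}
    [m0 : MeasurableSpace Ω] (μ : Measure Ω) [IsProbabilityMeasure μ] (hm : m ≤ m0)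
    {g Y : Ω → EuclideanSpace ℝ (Fin d)} (hgm : StronglyMeasurable[m] g)
    {C : ℝ} (hgC : ∀ ω, ‖g ω‖ ≤ C) (hY : Integrable Y μ) :
    ∫ ω, ⟪g ω, Y ω⟫ ∂μ = ∫ ω, ⟪g ω, (μ[Y|m]) ω⟫ ∂μ := by
  haveI : SigmaFinite (μ.trim hm) := inferInstance
  have hgi_bound : ∀ i : Fin d, ∀ ω, ‖g ω i‖ ≤ C := fun i ω =>
    (abs_coord_le_norm (g ω) i).trans (hgC _)
  have hgim : ∀ i : Fin d, StronglyMeasurable[m] fun ω => g ω i := fun i =>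
    (EuclideanSpace.proj i : EuclideanSpace ℝ (Fin d) →L[ℝ] ℝ).continuous.comp_stronglyMeasurable
      hgm
  have hYi_int : ∀ i : Fin d, Integrable (fun ω => Y ω i) μ := fun i =>
    (EuclideanSpace.proj i : EuclideanSpace ℝ (Fin d) →L[ℝ] ℝ).integrable_comp hY
  have key : ∀ i : Fin d, ∫ ω, g ω i * Y ω i ∂μ = ∫ ω, g ω i * (μ[Y|m]) ω i ∂μ := by
    intro i
    have hmul : μ[(fun ω => g ω i) * (fun ω => Y ω i)|m]
        =ᵐ[μ] (fun ω => g ω i) * (μ[fun ω => Y ω i|m]) :=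
      condExp_stronglyMeasurable_mul_of_bound hm (hgim i) (hYi_int i) C
        (Filter.Eventually.of_forall fun ω => hgi_bound i ω)
    calc ∫ ω, g ω i * Y ω i ∂μ
        = ∫ ω, (μ[(fun ω => g ω i) * (fun ω => Y ω i)|m]) ω ∂μ :=
          (integral_condExp hm).symm
      _ = ∫ ω, g ω i * (μ[fun ω => Y ω i|m]) ω ∂μ := integral_congr_ae hmul
      _ = ∫ ω, g ω i * (μ[Y|m]) ω i ∂μ := by
          refine integral_congr_ae ?_
          filter_upwards [condexp_coord μ hm hY i] with ω hω
          rw [hω]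
  have hprod_int : ∀ (Z : Ω → EuclideanSpace ℝ (Fin d)), Integrable Z μ → ∀ i : Fin d,
      Integrable (fun ω => g ω i * Z ω i) μ := by
    intro Z hZ i
    exact ((EuclideanSpace.proj i :
        EuclideanSpace ℝ (Fin d) →L[ℝ] ℝ).integrable_comp hZ).bdd_mul
      ((hgim i).mono hm).aestronglyMeasurable
      (Filter.Eventually.of_forall fun ω => hgi_bound i ω)
  have expand : ∀ (Z : Ω → EuclideanSpace ℝ (Fin d)), Integrable Z μ →
      ∫ ω, ⟪g ω, Z ω⟫ ∂μ = ∑ i : Fin d, ∫ ω, g ω i * Z ω i ∂μ := by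
    intro Z hZ
    rw [← integral_finset_sum _ (fun i _ => hprod_int Z hZ i)]
    refine integral_congr_ae (Filter.Eventually.of_forall fun ω => ?_)
    simp [PiLp.inner_apply, RCLike.inner_apply, conj_trivial, mul_comm]
  calc ∫ ω, ⟪g ω, Y ω⟫ ∂μ = ∑ i : Fin d, ∫ ω, g ω i * Y ω i ∂μ := expand Y hY
    _ = ∑ i : Fin d, ∫ ω, g ω i * (μ[Y|m]) ω i ∂μ := Finset.sum_congr rfl fun i _ => key i
    _ = ∫ ω, ⟪g ω, (μ[Y|m]) ω⟫ ∂μ := (expand _ integrable_condExp).symm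

/-- For the linear interpolation `Xₜ = (1-t)X₀ + tX₁` with marginals
`pₜ = law(Xₜ)`, and for every smooth compactly supported test function `φ`, the map
`t ↦ E[φ(Xₜ)]` is differentiable on `(0,1)` with derivative
`E[⟨∇φ(Xₜ), X₁ - X₀⟩] = E[⟨∇φ(Xₜ), uₜ⟩]`, where `uₜ = E[X₁ - X₀ | Xₜ]`. That is, `(pₜ)`
satisfies the continuity equation `∂ₜ pₜ + ∇·(pₜ u(t,·)) = 0` weakly. -/
theorem linear_interpolation_continuity_equation {d : ℕ}
    {Ω : Type*} [MeasurableSpace Ω] (P : Measure Ω) [IsProbabilityMeasure P]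
    (X₀ X₁ : Ω → EuclideanSpace ℝ (Fin d)) (hX₀ : Measurable X₀) (hX₁ : Measurable X₁)
    (hX₀2 : MemLp X₀ 2 P) (hX₁2 : MemLp X₁ 2 P)
    (φ : EuclideanSpace ℝ (Fin d) → ℝ) (hφ : ContDiff ℝ (⊤ : ℕ∞) φ)
    (hsupp : HasCompactSupport φ) :
    ∀ t ∈ Set.Ioo (0 : ℝ) 1,
      HasDerivAt (fun τ : ℝ => ∫ ω, φ ((1 - τ) • X₀ ω + τ • X₁ ω) ∂P)
        (∫ ω, ⟪gradient φ ((1 - t) • X₀ ω + t • X₁ ω), X₁ ω - X₀ ω⟫ ∂P) t ∧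
      (∫ ω, ⟪gradient φ ((1 - t) • X₀ ω + t • X₁ ω), X₁ ω - X₀ ω⟫ ∂P)
        = ∫ ω, ⟪gradient φ ((1 - t) • X₀ ω + t • X₁ ω),
            (P[fun ω' => X₁ ω' - X₀ ω' |
              MeasurableSpace.comap (fun ω' => (1 - t) • X₀ ω' + t • X₁ ω')
                (borel (EuclideanSpace ℝ (Fin d)))]) ω⟫ ∂P := by
  classical
  intro t ht
  have hYm : Measurable fun ω => X₁ ω - X₀ ω := hX₁.sub hX₀
  have hYint : Integrable (fun ω => X₁ ω - X₀ ω) P := by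
    have h2 : MemLp (fun ω => X₁ ω - X₀ ω) 2 P := hX₁2.sub hX₀2
    exact (h2.mono_exponent (by norm_num)).integrable le_rfl
  have hXt_meas : ∀ τ : ℝ, Measurable fun ω => (1 - τ) • X₀ ω + τ • X₁ ω := fun τ =>
    (hX₀.const_smul (1 - τ)).add (hX₁.const_smul τ)
  -- gradient facts
  have hgrad_cont : Continuous (gradient φ) :=
    (InnerProductSpace.toDual ℝ (EuclideanSpace ℝ (Fin d))).symm.continuous.comp
      (hφ.continuous_fderiv (by simp))
  have hgrad_supp : HasCompactSupport (gradient φ) :=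
    (hsupp.fderiv ℝ).comp_left
      (g := (InnerProductSpace.toDual ℝ (EuclideanSpace ℝ (Fin d))).symm) (map_zero _)
  obtain ⟨C, hC⟩ := hgrad_supp.exists_bound_of_continuous hgrad_cont
  obtain ⟨K, hK⟩ := ContDiff.lipschitzWith_of_hasCompactSupport hsupp hφ (by simp)
  obtain ⟨Cφ, hCφ⟩ := hsupp.exists_bound_of_continuous hφ.continuous
  -- pointwise derivative
  have h_diff : ∀ ω, HasDerivAt (fun τ => φ ((1 - τ) • X₀ ω + τ • X₁ ω))
      (⟪gradient φ ((1 - t) • X₀ ω + t • X₁ ω), X₁ ω - X₀ ω⟫) t := by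
    intro ω
    have hpath : HasDerivAt (fun τ : ℝ => (1 - τ) • X₀ ω + τ • X₁ ω) (X₁ ω - X₀ ω) t := by
      have h : (fun τ : ℝ => (1 - τ) • X₀ ω + τ • X₁ ω)
          = fun τ : ℝ => X₀ ω + τ • (X₁ ω - X₀ ω) := funext fun τ => by module
      rw [h]
      simpa using ((hasDerivAt_id t).smul_const (X₁ ω - X₀ ω)).const_add (X₀ ω)
    have hg : HasGradientAt φ (gradient φ ((1 - t) • X₀ ω + t • X₁ ω))
        ((1 - t) • X₀ ω + t • X₁ ω) := ((hφ.differentiable (by simp)) _).hasGradientAt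
    have := (hasGradientAt_iff_hasFDerivAt.mp hg).comp_hasDerivAt t hpath
    simpa [InnerProductSpace.toDual_apply_apply, Function.comp_def] using this
  -- part 1 via dominated differentiation
  have h1 : HasDerivAt (fun τ : ℝ => ∫ ω, φ ((1 - τ) • X₀ ω + τ • X₁ ω) ∂P)
      (∫ ω, ⟪gradient φ ((1 - t) • X₀ ω + t • X₁ ω), X₁ ω - X₀ ω⟫ ∂P) t := by
    refine (hasDerivAt_integral_of_dominated_loc_of_lip (s := Metric.ball t 1) (Metric.ball_mem_nhds t one_pos)
      (F := fun τ ω => φ ((1 - τ) • X₀ ω + τ • X₁ ω))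
      (F' := fun ω => ⟪gradient φ ((1 - t) • X₀ ω + t • X₁ ω), X₁ ω - X₀ ω⟫)
      (bound := fun ω => (K : ℝ) * ‖X₁ ω - X₀ ω‖) ?_ ?_ ?_ ?_ ?_ ?_).2
    · exact Filter.Eventually.of_forall fun τ =>
        (hφ.continuous.measurable.comp (hXt_meas τ)).aestronglyMeasurable
    · refine Integrable.mono' (integrable_const Cφ)
        (hφ.continuous.measurable.comp (hXt_meas t)).aestronglyMeasurable ?_
      exact Filter.Eventually.of_forall fun ω => by simpa using hCφ _
    · exact ((hgrad_cont.measurable.comp (hXt_meas t)).inner hYm).aestronglyMeasurable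
    · refine Filter.Eventually.of_forall fun ω => ?_
      rw [lipschitzOnWith_iff_dist_le_mul]
      intro τ _ σ _
      have hd : dist ((1 - τ) • X₀ ω + τ • X₁ ω) ((1 - σ) • X₀ ω + σ • X₁ ω)
          = ‖X₁ ω - X₀ ω‖ * dist τ σ := by
        rw [dist_eq_norm, dist_eq_norm]
        have h : ((1 - τ) • X₀ ω + τ • X₁ ω) - ((1 - σ) • X₀ ω + σ • X₁ ω)
            = (τ - σ) • (X₁ ω - X₀ ω) := by module
        rw [h, norm_smul, Real.norm_eq_abs, mul_comm]
      calc dist (φ ((1 - τ) • X₀ ω + τ • X₁ ω)) (φ ((1 - σ) • X₀ ω + σ • X₁ ω))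
          ≤ K * dist ((1 - τ) • X₀ ω + τ • X₁ ω) ((1 - σ) • X₀ ω + σ • X₁ ω) :=
            hK.dist_le_mul _ _
        _ = (K : ℝ) * ‖X₁ ω - X₀ ω‖ * dist τ σ := by rw [hd]; ring
        _ ≤ ↑(Real.nnabs ((K : ℝ) * ‖X₁ ω - X₀ ω‖)) * dist τ σ := by
            gcongr
            rw [Real.coe_nnabs]
            exact le_abs_self _
    · exact hYint.norm.const_mul _
    · exact Filter.Eventually.of_forall h_diff
  refine ⟨h1, ?_⟩
  -- part 2
  have hbor : borel (EuclideanSpace ℝ (Fin d))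
      = (inferInstance : MeasurableSpace (EuclideanSpace ℝ (Fin d))) :=
    BorelSpace.measurable_eq.symm
  have hm : MeasurableSpace.comap (fun ω' => (1 - t) • X₀ ω' + t • X₁ ω')
      (borel (EuclideanSpace ℝ (Fin d))) ≤ ‹MeasurableSpace Ω› := by
    rw [hbor]; exact (hXt_meas t).comap_le
  have hXtm : Measurable[MeasurableSpace.comap (fun ω' => (1 - t) • X₀ ω' + t • X₁ ω')
      (borel (EuclideanSpace ℝ (Fin d)))] fun ω' => (1 - t) • X₀ ω' + t • X₁ ω' := by
    rw [measurable_iff_comap_le]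
    exact (congrArg (MeasurableSpace.comap _) hbor).symm.le
  have hgm : StronglyMeasurable[MeasurableSpace.comap
      (fun ω' => (1 - t) • X₀ ω' + t • X₁ ω') (borel (EuclideanSpace ℝ (Fin d)))]
      fun ω => gradient φ ((1 - t) • X₀ ω + t • X₁ ω) :=
    (hgrad_cont.measurable.comp hXtm).stronglyMeasurable
  exact integral_inner_condexp P hm hgm (fun ω => hC _) hYint
end
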